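/- arXiv:2208.06404 — 5 statements merged into one kernel-verified Lean document; each statement's English description precedes it below -/
import Mathlib

section
/- Let Y be a strictly convex Banach space and let T : c0(⊕_{n=1}^∞ ℓ2^n) → Y be a bounded linear operator that attains its norm at a point x = (x_k) of the unit sphere of c0(⊕_{n=1}^∞ ℓ2^n), i.e. ‖T(x)‖ = ‖T‖ and ‖x‖ = 1. Then for every block index j such that (∑_{i∈I(j)} |x_i|²)^{1/2} < 1 and every coordinate k ∈ I(j), one has T(e_k) = 0. -/
open Filter Topology

noncomputable section

/-- The Euclidean space `ℓ₂ⁿ⁺¹` forming the `n`-th block (so blocks have dimensions 1, 2, 3, …),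
i.e. the block `I(n+1)` of the paper. -/
abbrev E2 (n : ℕ) : Type := EuclideanSpace ℝ (Fin (n + 1))

/-- `c₀(⊕ₙ ℓ₂ⁿ)`: the subspace of the `ℓ∞`-sum of the spaces `ℓ₂ⁿ` consisting of those
elements whose block norms tend to `0`; it carries the norm `‖x‖ = sup_n ‖x n‖`. -/
def c0E2 : Submodule ℝ (lp E2 ⊤) where
  carrier := {x | Tendsto (fun n => ‖x n‖) atTop (𝓝 0)}
  add_mem' := by
    intro x y hx hy
    refine squeeze_zero (fun n => norm_nonneg _) (fun n => ?_) (by simpa using hx.add hy)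
    rw [lp.coeFn_add]
    exact norm_add_le _ _
  zero_mem' := by
    simp only [Set.mem_setOf_eq, lp.coeFn_zero, Pi.zero_apply, norm_zero]
    exact tendsto_const_nhds
  smul_mem' := by
    intro c x hx
    have h : ∀ n, ‖(c • x : lp E2 ⊤) n‖ = ‖c‖ * ‖x n‖ := by
      intro n; rw [lp.coeFn_smul]; simp [norm_smul]
    have := hx.const_mul ‖c‖
    simp only [mul_zero] at this
    exact Tendsto.congr (fun n => (h n).symm) this

/-- The standard unit basis vector of `c₀(⊕ₙ ℓ₂ⁿ)` sitting in block `j` at coordinate `i`. -/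
def stdBasis (j : ℕ) (i : Fin (j + 1)) : c0E2 :=
  ⟨lp.single ⊤ j (EuclideanSpace.single i 1), by
    refine Tendsto.congr' ?_ (tendsto_const_nhds : Tendsto (fun _ : ℕ => (0:ℝ)) atTop (𝓝 0))
    filter_upwards [eventually_gt_atTop j] with n hn
    rw [lp.single_apply_ne ⊤ j _ (by omega : n ≠ j), norm_zero]⟩

/-- Lemma 2 of the paper. If `Y` is a strictly convex Banach space and
`T : c₀(⊕ₙ ℓ₂ⁿ) → Y` attains its norm at a point `x` of the unit sphere, then `T` vanishes on
every basis vector `e_k` whose block `I(j)` satisfies `(∑_{i ∈ I(j)} |x_i|²)^{1/2} < 1`. -/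
theorem stmt0 (Y : Type*) [NormedAddCommGroup Y] [NormedSpace ℝ Y]
    [StrictConvexSpace ℝ Y] [CompleteSpace Y]
    (T : c0E2 →L[ℝ] Y) (x : c0E2) (hx : ‖x‖ = 1) (hT : ‖T x‖ = ‖T‖) :
    ∀ j : ℕ, ‖(x : lp E2 ⊤) j‖ < 1 → ∀ i : Fin (j + 1), T (stdBasis j i) = 0 := by
  intro j hj i
  -- trivial case ‖T‖ = 0
  rcases eq_or_lt_of_le (norm_nonneg T) with hT0 | hT0
  · have h := T.le_opNorm (stdBasis j i)
    rw [← hT0, zero_mul] at h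
    exact norm_le_zero_iff.mp h
  set t : ℝ := 1 - ‖(x : lp E2 ⊤) j‖ with ht
  have htpos : 0 < t := by linarith
  set e : c0E2 := stdBasis j i with he
  have hecoe : (e : lp E2 ⊤) = lp.single ⊤ j (EuclideanSpace.single i 1) := rfl
  have hnorm_e_apply : ∀ n, ‖(e : lp E2 ⊤) n‖ ≤ 1 := by
    intro n
    rcases eq_or_ne n j with rfl | hn
    · rw [hecoe, lp.single_apply_self]
      simp [EuclideanSpace.norm_single]
    · rw [hecoe, lp.single_apply_ne ⊤ j _ hn]; simp
  -- norms of the perturbed points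
  have key : ∀ s : ℝ, |s| = t → ‖x + s • e‖ ≤ 1 := by
    intro s hs
    have : ‖((x + s • e : c0E2) : lp E2 ⊤)‖ ≤ 1 := by
      refine lp.norm_le_of_forall_le zero_le_one fun n => ?_
      have hcoe : ((x + s • e : c0E2) : lp E2 ⊤) n = (x : lp E2 ⊤) n + s • (e : lp E2 ⊤) n :=
        rfl
      rw [hcoe]
      rcases eq_or_ne n j with rfl | hn
      · calc ‖(x : lp E2 ⊤) n + s • (e : lp E2 ⊤) n‖
            ≤ ‖(x : lp E2 ⊤) n‖ + ‖s • (e : lp E2 ⊤) n‖ := norm_add_le _ _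
          _ ≤ ‖(x : lp E2 ⊤) n‖ + t * 1 := by
              refine add_le_add (le_refl _) ?_
              rw [norm_smul, Real.norm_eq_abs, hs]
              exact mul_le_mul_of_nonneg_left (hnorm_e_apply n) htpos.le
          _ = 1 := by rw [mul_one, ht]; ring
      · rw [hecoe, lp.single_apply_ne ⊤ j _ hn, smul_zero, add_zero]
        calc ‖(x : lp E2 ⊤) n‖ ≤ ‖(x : lp E2 ⊤)‖ := lp.norm_apply_le_norm (by norm_num) _ n
          _ = 1 := hx
    exact this
  have h1 : ‖x + t • e‖ ≤ 1 := key t (abs_of_pos htpos)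
  have h2 : ‖x + (-t) • e‖ ≤ 1 := key (-t) (by rw [abs_neg, abs_of_pos htpos])
  set u := T (x + t • e) with hu
  set v := T (x + (-t) • e) with hv
  have hu_le : ‖u‖ ≤ ‖T‖ := by
    calc ‖u‖ ≤ ‖T‖ * ‖x + t • e‖ := T.le_opNorm _
      _ ≤ ‖T‖ * 1 := by gcongr
      _ = ‖T‖ := mul_one _
  have hv_le : ‖v‖ ≤ ‖T‖ := by
    calc ‖v‖ ≤ ‖T‖ * ‖x + (-t) • e‖ := T.le_opNorm _
      _ ≤ ‖T‖ * 1 := by gcongr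
      _ = ‖T‖ := mul_one _
  have huv : u + v = T ((2 : ℝ) • x) := by
    rw [hu, hv, ← map_add]
    congr 1
    module
  have huv_norm : ‖u + v‖ = 2 * ‖T‖ := by
    rw [huv, map_smul, norm_smul, ← hT]
    norm_num
  have hun : ‖u‖ = ‖T‖ := by
    have : 2 * ‖T‖ ≤ ‖u‖ + ‖v‖ := huv_norm ▸ norm_add_le u v
    linarith
  have hvn : ‖v‖ = ‖T‖ := by
    have : 2 * ‖T‖ ≤ ‖u‖ + ‖v‖ := huv_norm ▸ norm_add_le u v
    linarith
  have heq : u = v := by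
    refine eq_of_norm_eq_of_norm_add_eq (hun.trans hvn.symm) ?_
    rw [huv_norm, hun, hvn]; ring
  have : T ((2 * t) • e) = 0 := by
    have : u - v = T ((2 * t) • e) := by
      rw [hu, hv, ← map_sub]
      congr 1
      module
    rw [← this, heq, sub_self]
  have h2t : (2 * t) ≠ 0 := by positivity
  rw [map_smul] at this
  have := smul_eq_zero.mp this
  rcases this with h | h
  · exact absurd h h2t
  · exact h
end
end

section
/- Let Y be a strictly convex Banach space, let T : X → Y be a nonzero bounded linear operator between Banach spaces, and let x ∈ X with ‖x‖ ≤ 1 and ‖T(x)‖ = ‖T‖. If w ∈ X satisfies ‖x + w‖ ≤ 1 and ‖x − w‖ ≤ 1, then T(w) = 0. -/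
/-!
`T (x + w)` and `T (x - w)` lie in the closed ball of radius `‖T‖` and their midpoint `T x` lies on
its boundary sphere. Strict convexity of `Y` forces them to coincide, so `2 • T w = 0`.
-/

theorem eq_of_norm_le_of_two_mul_le_norm_add {E : Type*} [NormedAddCommGroup E] [NormedSpace ℝ E]
    [StrictConvexSpace ℝ E] {a b : E} {r : ℝ} (ha : ‖a‖ ≤ r) (hb : ‖b‖ ≤ r)
    (hab : 2 * r ≤ ‖a + b‖) : a = b := by
  by_contra hne
  have hmid : ‖(1 / 2 : ℝ) • a + (1 / 2 : ℝ) • b‖ < r :=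
    norm_combo_lt_of_ne ha hb hne (by norm_num) (by norm_num) (by norm_num)
  rw [← smul_add, norm_smul, Real.norm_of_nonneg (by norm_num)] at hmid
  linarith

theorem stmt1_general (X Y : Type*) [NormedAddCommGroup X] [NormedSpace ℝ X]
    [NormedAddCommGroup Y] [NormedSpace ℝ Y] [StrictConvexSpace ℝ Y]
    (T : X →L[ℝ] Y) (x : X) (hTx : ‖T x‖ = ‖T‖)
    (w : X) (hw₁ : ‖x + w‖ ≤ 1) (hw₂ : ‖x - w‖ ≤ 1) : T w = 0 := by
  have hsum : T (x + w) + T (x - w) = (2 : ℝ) • T x := by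
    rw [map_add, map_sub, two_smul]; abel
  have hdiff : T (x + w) - T (x - w) = (2 : ℝ) • T w := by
    rw [map_add, map_sub, two_smul]; abel
  have heq : T (x + w) = T (x - w) :=
    eq_of_norm_le_of_two_mul_le_norm_add (T.unit_le_opNorm _ hw₁) (T.unit_le_opNorm _ hw₂)
      (by rw [hsum, norm_smul, hTx, Real.norm_two])
  rw [heq, sub_self, eq_comm, smul_eq_zero] at hdiff
  exact hdiff.resolve_left two_ne_zero

/-- Let `Y` be a strictly convex Banach space, `T : X → Y` a nonzero bounded
linear operator, and `x ∈ X` with `‖x‖ ≤ 1` and `‖T x‖ = ‖T‖`. If `w` satisfies `‖x + w‖ ≤ 1`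
and `‖x - w‖ ≤ 1`, then `T w = 0`. -/
theorem stmt1 (X Y : Type*) [NormedAddCommGroup X] [NormedSpace ℝ X] [CompleteSpace X]
    [NormedAddCommGroup Y] [NormedSpace ℝ Y] [StrictConvexSpace ℝ Y] [CompleteSpace Y]
    (T : X →L[ℝ] Y) (hT : T ≠ 0) (x : X) (hx : ‖x‖ ≤ 1) (hTx : ‖T x‖ = ‖T‖)
    (w : X) (hw₁ : ‖x + w‖ ≤ 1) (hw₂ : ‖x - w‖ ≤ 1) : T w = 0 :=
  stmt1_general X Y T x hTx w hw₁ hw₂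
end

section
/- Let Y be a strictly convex real Banach space. If the pair (c0(⊕_{n=1}^∞ ℓ2^n), Y) has the Bishop-Phelps-Bollobás property for operators, then Y is uniformly convex. -/
/-!
Let `x, y` be unit vectors with `‖x - y‖ ≥ ε` and `‖x + y‖` close to `2`. The operator
`T z = z₀ • (x + y) / 2 + z₁ • (x - y) / 2`, where `z₀, z₁` are the first coordinates of the
blocks `0` and `1`, has norm at most `1` and almost attains it at the basis vector `e₀`.
The BPB property yields `S` close to `T` attaining its norm at some `u` close to `e₀`. Then
block `1` of `u` has norm `< 1`, so `u ± c • e₁` stays in the unit ball for some `c > 0`, and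
strict convexity of `Y` forces `S e₁ = 0`. This contradicts `‖(S - T) e₁‖ ≥ ‖(x - y) / 2‖ ≥ ε / 2`.
-/

open Filter Topology

noncomputable section

/-- A pair `(X, Y)` of normed spaces has the **Bishop–Phelps–Bollobás property for operators**:
for every `ε > 0` there is `η > 0` such that whenever a norm-one operator `T : X → Y` and a
norm-one vector `x₀` satisfy `‖T x₀‖ > 1 - η`, there are a norm-one vector `u₀` and a norm-one
operator `S` with `‖S u₀‖ = 1`, `‖u₀ - x₀‖ < ε` and `‖S - T‖ < ε`. -/
def HasBPBp (X Y : Type*) [NormedAddCommGroup X] [NormedSpace ℝ X]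
    [NormedAddCommGroup Y] [NormedSpace ℝ Y] : Prop :=
  ∀ ε : ℝ, 0 < ε → ∃ η : ℝ, 0 < η ∧
    ∀ (T : X →L[ℝ] Y) (x₀ : X), ‖T‖ = 1 → ‖x₀‖ = 1 → 1 - η < ‖T x₀‖ →
      ∃ (u₀ : X) (S : X →L[ℝ] Y),
        ‖u₀‖ = 1 ∧ ‖S‖ = 1 ∧ ‖S u₀‖ = 1 ∧ ‖u₀ - x₀‖ < ε ∧ ‖S - T‖ < ε

namespace ContinuousLinearMap

variable {X Y : Type*} [NormedAddCommGroup X] [NormedSpace ℝ X]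
  [NormedAddCommGroup Y] [NormedSpace ℝ Y]

theorem norm_apply_le_norm_inv_smul_apply {T : X →L[ℝ] Y} (hT : ‖T‖ ≤ 1) (z : X) :
    ‖T z‖ ≤ ‖(‖T‖⁻¹ • T) z‖ := by
  rw [smul_apply, norm_smul, norm_inv, norm_norm]
  rcases (norm_nonneg T).eq_or_lt with hT0 | hTpos
  · rw [← hT0, inv_zero, zero_mul]
    simpa [← hT0] using T.le_opNorm z
  · exact le_mul_of_one_le_left (norm_nonneg _) ((one_le_inv₀ hTpos).2 hT)

theorem norm_inv_norm_smul_self {T : X →L[ℝ] Y} (hT : T ≠ 0) :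
    ‖‖T‖⁻¹ • T‖ = 1 := by
  rw [norm_smul, norm_inv, norm_norm, inv_mul_cancel₀ (norm_ne_zero_iff.2 hT)]

/-- `S u` is the midpoint of `S (u + w)` and `S (u - w)`, which lie in the unit ball; strict
convexity makes them equal. -/
theorem apply_eq_zero_of_norm_add_le_of_norm_sub_le [StrictConvexSpace ℝ Y]
    {S : X →L[ℝ] Y} (hS : ‖S‖ ≤ 1) {u w : X} (hSu : ‖S u‖ = 1) (hadd : ‖u + w‖ ≤ 1)
    (hsub : ‖u - w‖ ≤ 1) : S w = 0 := by
  have hball : ∀ v : X, ‖v‖ ≤ 1 → ‖S v‖ ≤ 1 := fun v hv =>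
    (S.le_opNorm v).trans (mul_le_one₀ hS (norm_nonneg v) hv)
  have hmid : (1 / 2 : ℝ) • S (u + w) + (1 / 2 : ℝ) • S (u - w) = S u := by
    simp only [map_add, map_sub]; module
  have heq : S (u + w) = S (u - w) := by
    by_contra hne
    have := norm_combo_lt_of_ne (hball _ hadd) (hball _ hsub) hne (a := 1 / 2) (b := 1 / 2)
      (by norm_num) (by norm_num) (by norm_num)
    rw [hmid, hSu] at this
    exact lt_irrefl _ this
  rw [map_add, map_sub, sub_eq_add_neg, add_right_inj] at heq
  rw [eq_neg_iff_add_eq_zero, ← two_smul ℝ, smul_eq_zero] at heq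
  exact heq.resolve_left two_ne_zero

end ContinuousLinearMap

theorem norm_smul_add_add_smul_sub_le {E : Type*} [SeminormedAddCommGroup E] [NormedSpace ℝ E]
    {x y : E} (hx : ‖x‖ ≤ 1) (hy : ‖y‖ ≤ 1) {s t c : ℝ} (hs : |s| ≤ c) (ht : |t| ≤ c) :
    ‖s • (x + y) + t • (x - y)‖ ≤ 2 * c := by
  have hcomb : s • (x + y) + t • (x - y) = (s + t) • x + (s - t) • y := by module
  have habs : |s + t| + |s - t| ≤ 2 * c := by
    rw [abs_le] at hs ht
    cases abs_cases (s + t) <;> cases abs_cases (s - t) <;> linarith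
  calc ‖s • (x + y) + t • (x - y)‖ ≤ |s + t| * ‖x‖ + |s - t| * ‖y‖ := by
        rw [hcomb]; refine (norm_add_le _ _).trans_eq ?_; rw [norm_smul, norm_smul]; rfl
    _ ≤ |s + t| + |s - t| := by
        gcongr
        · exact mul_le_of_le_one_right (abs_nonneg _) hx
        · exact mul_le_of_le_one_right (abs_nonneg _) hy
    _ ≤ 2 * c := habs

namespace c0E2

variable {Y : Type*} [NormedAddCommGroup Y] [NormedSpace ℝ Y]

def coord (n : ℕ) (i : Fin (n + 1)) : c0E2 →L[ℝ] ℝ :=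
  (PiLp.proj 2 (fun _ => ℝ) i).comp ((lp.evalCLM ℝ E2 ⊤ n).comp c0E2.subtypeL)

theorem coord_apply (n : ℕ) (i : Fin (n + 1)) (z : c0E2) :
    coord n i z = (z : lp E2 ⊤) n i := rfl

theorem norm_apply_le_norm (z : c0E2) (n : ℕ) : ‖(z : lp E2 ⊤) n‖ ≤ ‖z‖ :=
  lp.norm_apply_le_norm ENNReal.top_ne_zero _ n

theorem abs_coord_le (n : ℕ) (i : Fin (n + 1)) (z : c0E2) : |coord n i z| ≤ ‖z‖ :=
  (PiLp.norm_apply_le _ i).trans (norm_apply_le_norm z n)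

theorem norm_le_of_forall_le {z : c0E2} {C : ℝ} (hC : 0 ≤ C)
    (hz : ∀ n, ‖(z : lp E2 ⊤) n‖ ≤ C) : ‖z‖ ≤ C :=
  lp.norm_le_of_forall_le hC hz

theorem stdBasis_apply_self (j : ℕ) (i : Fin (j + 1)) :
    (stdBasis j i : lp E2 ⊤) j = EuclideanSpace.single i 1 :=
  lp.single_apply_self _ _ _

theorem stdBasis_apply_of_ne {n j : ℕ} (h : n ≠ j) (i : Fin (j + 1)) :
    (stdBasis j i : lp E2 ⊤) n = 0 :=
  lp.single_apply_ne _ _ _ h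

theorem norm_stdBasis (j : ℕ) (i : Fin (j + 1)) : ‖stdBasis j i‖ = 1 := by
  refine le_antisymm (norm_le_of_forall_le zero_le_one fun n => ?_) ?_
  · rcases eq_or_ne n j with rfl | hn
    · simp [stdBasis_apply_self]
    · simp [stdBasis_apply_of_ne hn]
  · simpa [stdBasis_apply_self] using norm_apply_le_norm (stdBasis j i) j

theorem coord_stdBasis_self (j : ℕ) (i : Fin (j + 1)) : coord j i (stdBasis j i) = 1 := by
  simp [coord_apply, stdBasis_apply_self]

theorem coord_stdBasis_of_ne {n j : ℕ} (h : n ≠ j) (k : Fin (n + 1)) (i : Fin (j + 1)) :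
    coord n k (stdBasis j i) = 0 := by
  simp [coord_apply, stdBasis_apply_of_ne h]

theorem norm_apply_le_norm_sub_stdBasis {n j : ℕ} (h : n ≠ j) (i : Fin (j + 1)) (u : c0E2) :
    ‖(u : lp E2 ⊤) n‖ ≤ ‖u - stdBasis j i‖ := by
  simpa [stdBasis_apply_of_ne h] using norm_apply_le_norm (u - stdBasis j i) n

theorem norm_add_smul_stdBasis_le_one {u : c0E2} (hu : ‖u‖ ≤ 1) {j : ℕ} (i : Fin (j + 1)) {c : ℝ}
    (hc : ‖(u : lp E2 ⊤) j‖ + |c| ≤ 1) : ‖u + c • stdBasis j i‖ ≤ 1 := by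
  refine norm_le_of_forall_le zero_le_one fun n => ?_
  simp only [Submodule.coe_add, Submodule.coe_smul, lp.coeFn_add, lp.coeFn_smul, Pi.add_apply,
    Pi.smul_apply]
  rcases eq_or_ne n j with rfl | hn
  · refine (norm_add_le _ _).trans ?_
    simpa [stdBasis_apply_self, norm_smul] using hc
  · simpa [stdBasis_apply_of_ne hn] using (norm_apply_le_norm u n).trans hu

theorem apply_stdBasis_eq_zero_of_norm_apply_eq_one [StrictConvexSpace ℝ Y] {S : c0E2 →L[ℝ] Y}
    (hS : ‖S‖ ≤ 1) {u : c0E2} (hu : ‖u‖ ≤ 1) (hSu : ‖S u‖ = 1) {j : ℕ}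
    (huj : ‖(u : lp E2 ⊤) j‖ < 1) (i : Fin (j + 1)) :
    S (stdBasis j i) = 0 := by
  set c := 1 - ‖(u : lp E2 ⊤) j‖
  have hc : 0 < c := sub_pos.2 huj
  have hcu : ‖(u : lp E2 ⊤) j‖ + |c| ≤ 1 := by rw [abs_of_pos hc]; simp [c]
  have hadd := norm_add_smul_stdBasis_le_one hu i hcu
  have hsub := norm_add_smul_stdBasis_le_one hu i (c := -c) (by rwa [abs_neg])
  rw [neg_smul, ← sub_eq_add_neg] at hsub
  have := S.apply_eq_zero_of_norm_add_le_of_norm_sub_le hS hSu hadd hsub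
  rwa [map_smul, smul_eq_zero, or_iff_right hc.ne'] at this

def opOfPair (a b : Y) : c0E2 →L[ℝ] Y :=
  (coord 0 0).smulRight a + (coord 1 0).smulRight b

theorem opOfPair_apply (a b : Y) (z : c0E2) :
    opOfPair a b z = coord 0 0 z • a + coord 1 0 z • b := rfl

theorem opOfPair_stdBasis_zero (a b : Y) : opOfPair a b (stdBasis 0 0) = a := by
  rw [opOfPair_apply, coord_stdBasis_self, coord_stdBasis_of_ne one_ne_zero, one_smul,
    zero_smul, add_zero]

theorem opOfPair_stdBasis_one (a b : Y) : opOfPair a b (stdBasis 1 0) = b := by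
  rw [opOfPair_apply, coord_stdBasis_self, coord_stdBasis_of_ne zero_ne_one, one_smul,
    zero_smul, zero_add]

theorem norm_opOfPair_half_add_half_sub_le {x y : Y} (hx : ‖x‖ ≤ 1) (hy : ‖y‖ ≤ 1) :
    ‖opOfPair ((2 : ℝ)⁻¹ • (x + y)) ((2 : ℝ)⁻¹ • (x - y))‖ ≤ 1 := by
  refine ContinuousLinearMap.opNorm_le_bound _ zero_le_one fun z => ?_
  have hsum := norm_smul_add_add_smul_sub_le hx hy (abs_coord_le 0 0 z) (abs_coord_le 1 0 z)
  rw [opOfPair_apply, smul_comm _ (2 : ℝ)⁻¹, smul_comm _ (2 : ℝ)⁻¹, ← smul_add, norm_smul,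
    norm_inv, Real.norm_two, one_mul]
  linarith

end c0E2

open c0E2

theorem stmt2_general (Y : Type*) [NormedAddCommGroup Y] [NormedSpace ℝ Y]
    [StrictConvexSpace ℝ Y]
    (h : HasBPBp c0E2 Y) : UniformConvexSpace Y := by
  refine ⟨fun ε hε => ?_⟩
  obtain ⟨η, hη, hBPB⟩ := h (min (ε / 2) 1) (by positivity)
  refine ⟨η, hη, fun x hx y hy hxy => le_of_not_gt fun hnear => ?_⟩
  set T := opOfPair ((2 : ℝ)⁻¹ • (x + y)) ((2 : ℝ)⁻¹ • (x - y))
  have hT : ‖T‖ ≤ 1 := norm_opOfPair_half_add_half_sub_le hx.le hy.le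
  have hTe₀ : 1 - η < ‖T (stdBasis 0 0)‖ := by
    rw [opOfPair_stdBasis_zero, norm_smul, norm_inv, Real.norm_two]
    linarith
  have hTe₁ : ε / 2 ≤ ‖T (stdBasis 1 0)‖ := by
    rw [opOfPair_stdBasis_one, norm_smul, norm_inv, Real.norm_two]
    linarith
  have hT0 : T ≠ 0 := fun h0 => by
    rw [h0, zero_apply, norm_zero] at hTe₁
    linarith
  obtain ⟨u, S, hu, hS, hSu, hux, hST⟩ := hBPB (‖T‖⁻¹ • T) (stdBasis 0 0)
    (T.norm_inv_norm_smul_self hT0) (norm_stdBasis 0 0)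
    (hTe₀.trans_le (T.norm_apply_le_norm_inv_smul_apply hT _))
  have hSe₁ : S (stdBasis 1 0) = 0 :=
    apply_stdBasis_eq_zero_of_norm_apply_eq_one hS.le hu.le hSu
      ((norm_apply_le_norm_sub_stdBasis one_ne_zero 0 u).trans_lt
        (hux.trans_le (min_le_right _ _))) 0
  have hTS : ‖T (stdBasis 1 0)‖ ≤ ‖S - ‖T‖⁻¹ • T‖ :=
    calc ‖T (stdBasis 1 0)‖ ≤ ‖(‖T‖⁻¹ • T) (stdBasis 1 0)‖ :=
          T.norm_apply_le_norm_inv_smul_apply hT _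
      _ = ‖(S - ‖T‖⁻¹ • T) (stdBasis 1 0)‖ := by
          rw [sub_apply, hSe₁, zero_sub, norm_neg]
      _ ≤ ‖S - ‖T‖⁻¹ • T‖ := (S - ‖T‖⁻¹ • T).unit_le_opNorm _ (norm_stdBasis 1 0).le
  linarith [min_le_left (ε / 2) 1]

/-- Theorem 3 of the paper. If `Y` is a strictly convex real Banach space and
the pair `(c₀(⊕ₙ ℓ₂ⁿ), Y)` has the Bishop–Phelps–Bollobás property for operators, then `Y` is
uniformly convex. -/
theorem stmt2 (Y : Type*) [NormedAddCommGroup Y] [NormedSpace ℝ Y]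
    [StrictConvexSpace ℝ Y] [CompleteSpace Y]
    (h : HasBPBp c0E2 Y) : UniformConvexSpace Y :=
  stmt2_general Y h
end
end

section
/- If Y is a uniformly convex Banach space, then for every n ∈ ℕ the pair (ℓ∞(⊕_{k=1}^n ℓ2^k), Y) has the Bishop-Phelps-Bollobás property for operators. -/
noncomputable section
open scoped RealInnerProductSpace

/-- The finite `ℓ∞`-sum `ℓ∞(⊕_{k=1}^n ℓ₂ᵏ)` of the Euclidean spaces `ℓ₂¹, …, ℓ₂ⁿ`,
normed by `‖w‖ = max_{1 ≤ k ≤ n} ‖w_k‖₂`. -/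
abbrev FinLinftySum (n : ℕ) : Type :=
  PiLp ⊤ (fun k : Fin n => EuclideanSpace ℝ (Fin (k.1 + 1)))

section aux
variable {n : ℕ}

lemma pinorm_le (w : FinLinftySum n) {C : ℝ} (hC : 0 ≤ C) (h : ∀ k, ‖w k‖ ≤ C) :
    ‖w‖ ≤ C := by
  rw [PiLp.norm_eq_ciSup]; exact Real.iSup_le h hC

lemma picoord_le (w : FinLinftySum n) (k : Fin n) : ‖w k‖ ≤ ‖w‖ := by
  rw [PiLp.norm_eq_ciSup]
  exact le_ciSup (f := fun j => ‖w j‖) (Set.Finite.bddAbove (Set.finite_range _)) k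

def maskCLM (A : Finset (Fin n)) : FinLinftySum n →L[ℝ] FinLinftySum n :=
  LinearMap.toContinuousLinearMap
  { toFun := fun w => (WithLp.equiv ⊤ _).symm (fun k => if k ∈ A then w k else 0)
    map_add' := by
      intro x y; apply PiLp.ext; intro k; by_cases hk : k ∈ A <;> simp [hk]
    map_smul' := by
      intro c x; apply PiLp.ext; intro k; by_cases hk : k ∈ A <;> simp [hk] }

lemma maskCLM_apply (A : Finset (Fin n)) (w : FinLinftySum n) (k : Fin n) :
    maskCLM A w k = if k ∈ A then w k else 0 := rfl

def avgInner (A : Finset (Fin n)) (v : ∀ k : Fin n, EuclideanSpace ℝ (Fin (k.1 + 1))) :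
    FinLinftySum n →L[ℝ] ℝ :=
  (A.card : ℝ)⁻¹ • ∑ k ∈ A, (innerSL ℝ (v k)).comp (PiLp.proj ⊤ _ k)

lemma avgInner_apply (A : Finset (Fin n)) (v : ∀ k : Fin n, EuclideanSpace ℝ (Fin (k.1 + 1)))
    (w : FinLinftySum n) :
    avgInner A v w = (A.card : ℝ)⁻¹ * ∑ k ∈ A, ⟪v k, w k⟫ := by
  simp [avgInner, ContinuousLinearMap.sum_apply]

lemma exists_max {E F : Type*} [NormedAddCommGroup E] [NormedSpace ℝ E]
    [FiniteDimensional ℝ E] [NormedAddCommGroup F] [NormedSpace ℝ F] (T : E →L[ℝ] F) :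
    ∃ u : E, ‖u‖ ≤ 1 ∧ ‖T u‖ = ‖T‖ := by
  obtain ⟨u, hu, hmax⟩ := (isCompact_closedBall (0:E) 1).exists_isMaxOn
    ⟨0, Metric.mem_closedBall_self zero_le_one⟩ ((T.continuous.norm).continuousOn)
  rw [Metric.mem_closedBall, dist_zero_right] at hu
  refine ⟨u, hu, le_antisymm ((T.le_opNorm u).trans
    (by nlinarith [norm_nonneg (T u), T.opNorm_nonneg])) ?_⟩
  refine T.opNorm_le_bound (norm_nonneg _) fun w => ?_
  rcases eq_or_ne w 0 with rfl | hw
  · simp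
  · have hv : (‖w‖⁻¹ • w) ∈ Metric.closedBall (0:E) 1 := by
      rw [Metric.mem_closedBall, dist_zero_right, norm_smul, norm_inv, norm_norm]
      rw [inv_mul_cancel₀ (norm_ne_zero_iff.2 hw)]
    have hb := hmax hv
    simp only [Set.mem_setOf_eq, map_smul, norm_smul, norm_inv, norm_norm] at hb
    have hw' : (0:ℝ) < ‖w‖ := norm_pos_iff.2 hw
    calc ‖T w‖ = ‖w‖ * (‖w‖⁻¹ * ‖T w‖) := by field_simp
    _ ≤ ‖w‖ * ‖T u‖ := mul_le_mul_of_nonneg_left hb (norm_nonneg w)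
    _ = ‖T u‖ * ‖w‖ := mul_comm _ _

end aux

lemma clm_norm_smul {E F : Type*} [NormedAddCommGroup E] [NormedSpace ℝ E]
    [NormedAddCommGroup F] [NormedSpace ℝ F] (c : ℝ) (T : E →L[ℝ] F) :
    ‖c • T‖ = |c| * ‖T‖ := by
  rw [← Real.norm_eq_abs]
  exact norm_smul c T

set_option maxHeartbeats 3000000 in
/-- Proposition 5 of the paper. If `Y` is a uniformly convex Banach space,
then for every `n` the pair `(ℓ∞(⊕_{k=1}^n ℓ₂ᵏ), Y)` has the Bishop–Phelps–Bollobás property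
for operators. -/
theorem stmt6 (Y : Type*) [NormedAddCommGroup Y] [NormedSpace ℝ Y]
    [UniformConvexSpace Y] [CompleteSpace Y] (n : ℕ) :
    HasBPBp (FinLinftySum n) Y := by
  intro ε hε
  set e := min ε 1 with he_def
  have he0 : 0 < e := lt_min hε one_pos
  have he1 : e ≤ 1 := min_le_right _ _
  have heε : e ≤ ε := min_le_left _ _
  set r : ℝ := e / 8 with hr_def
  have hr0 : 0 < r := by positivity
  set t : ℝ := e ^ 2 / (100 * (n + 1)) with ht_def
  have ht0 : 0 < t := by positivity
  have htn : t * (n + 1) = e ^ 2 / 100 := by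
    rw [ht_def, div_mul_eq_mul_div, div_eq_div_iff (by positivity) (by norm_num)]; ring
  have hte : t ≤ e / 100 := by
    rw [ht_def]
    rw [div_le_div_iff₀ (by positivity) (by norm_num : (0:ℝ) < 100)]
    calc e ^ 2 * 100 = e * e * 100 := by ring
    _ ≤ 1 * e * 100 := by nlinarith
    _ ≤ e * (100 * (n+1)) := by nlinarith [Nat.cast_nonneg (α := ℝ) n]
  have ht1 : t ≤ 1 / 100 := hte.trans (by linarith)
  set ε₁ : ℝ := r * t with hε₁_def
  have hε₁0 : 0 < ε₁ := by positivity
  obtain ⟨δ, hδ0, hδ⟩ := exists_forall_closed_ball_dist_add_le_two_sub Y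
    (show (0:ℝ) < 2 * t * ε₁ by positivity)
  refine ⟨min (r * t) (δ / 2), lt_min (by positivity) (by positivity), ?_⟩
  set η : ℝ := min (r * t) (δ / 2) with hη_def
  have hηrt : η ≤ r * t := min_le_left _ _
  have hηδ : η ≤ δ / 2 := min_le_right _ _
  have hη0 : 0 < η := lt_min (by positivity) (by positivity)
  intro T x₀ hT hx₀ hTx₀
  have hx₀k : ∀ k, ‖x₀ k‖ ≤ 1 := fun k => hx₀ ▸ picoord_le x₀ k
  -- the active set A
  set A : Finset (Fin n) := Finset.univ.filter (fun k => 1 - t < ‖x₀ k‖) with hA_def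
  have hmemA : ∀ k, k ∈ A ↔ 1 - t < ‖x₀ k‖ := by
    intro k; simp [hA_def]
  have hAne : A.Nonempty := by
    by_contra h
    rw [Finset.not_nonempty_iff_eq_empty] at h
    have : ‖x₀‖ ≤ 1 - t := by
      refine pinorm_le _ (by linarith) fun k => ?_
      by_contra hk
      push_neg at hk
      have : k ∈ A := (hmemA k).2 hk
      simp [h] at this
    rw [hx₀] at this; linarith
  set m : ℕ := A.card with hm_def
  have hm1 : (1:ℝ) ≤ (m:ℝ) := by
    have := Finset.card_pos.2 hAne
    exact_mod_cast this
  have hmn : (m:ℝ) ≤ (n:ℝ) := by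
    have : A.card ≤ n := by
      simpa using Finset.card_le_univ A
    exact_mod_cast this
  have hm0 : (0:ℝ) < (m:ℝ) := by linarith
  -- claim 1 : T is small on coordinates outside A
  have claim1 : ∀ w : FinLinftySum n, ‖w‖ ≤ 1 → (∀ k ∈ A, w k = 0) → ‖T w‖ ≤ ε₁ := by
    intro w hw hwA
    have hball : ∀ s : ℝ, s = 1 ∨ s = -1 → ‖x₀ + (s * t) • w‖ ≤ 1 := by
      intro s hs
      refine pinorm_le _ zero_le_one fun k => ?_
      by_cases hk : k ∈ A
      · have : (x₀ + (s * t) • w) k = x₀ k := by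
          simp [hwA k hk]
        rw [this]; exact hx₀k k
      · have hk' : ‖x₀ k‖ ≤ 1 - t := by
          by_contra hc; push_neg at hc; exact hk ((hmemA k).2 hc)
        have hwk : ‖w k‖ ≤ 1 := (picoord_le w k).trans hw
        have hs1 : |s| = 1 := by rcases hs with rfl | rfl <;> norm_num
        calc ‖(x₀ + (s * t) • w) k‖ = ‖x₀ k + (s * t) • w k‖ := by simp
        _ ≤ ‖x₀ k‖ + ‖(s * t) • w k‖ := norm_add_le _ _
        _ = ‖x₀ k‖ + |s| * t * ‖w k‖ := by
            rw [norm_smul, Real.norm_eq_abs, abs_mul, abs_of_pos ht0]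
        _ ≤ (1 - t) + 1 * t * 1 := by
            rw [hs1]
            have := norm_nonneg (w k)
            nlinarith
        _ = 1 := by ring
    by_contra hcon
    push_neg at hcon
    set a := T (x₀ + (1 * t) • w) with ha
    set b := T (x₀ + ((-1) * t) • w) with hb
    have hna : ‖a‖ ≤ 1 := by
      rw [ha]
      calc ‖T (x₀ + (1 * t) • w)‖ ≤ ‖T‖ * ‖x₀ + (1 * t) • w‖ := T.le_opNorm _
      _ ≤ 1 * 1 := by
          apply mul_le_mul (le_of_eq hT) (hball 1 (Or.inl rfl)) (norm_nonneg _) zero_le_one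
      _ = 1 := by ring
    have hnb : ‖b‖ ≤ 1 := by
      rw [hb]
      calc ‖T (x₀ + ((-1) * t) • w)‖ ≤ ‖T‖ * ‖x₀ + ((-1) * t) • w‖ := T.le_opNorm _
      _ ≤ 1 * 1 := by
          apply mul_le_mul (le_of_eq hT) (hball (-1) (Or.inr rfl)) (norm_nonneg _) zero_le_one
      _ = 1 := by ring
    have hab : a - b = (2 * t) • T w := by
      rw [ha, hb, ← map_sub,
        show x₀ + (1 * t) • w - (x₀ + ((-1) * t) • w) = (2 * t) • w from by module, map_smul]
    have hdist : 2 * t * ε₁ ≤ ‖a - b‖ := by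
      rw [hab, norm_smul, Real.norm_eq_abs, abs_of_pos (show (0:ℝ) < 2 * t by positivity)]
      exact mul_le_mul_of_nonneg_left (le_of_lt hcon) (by positivity)
    have := hδ hna hnb hdist
    have hsum : a + b = (2 : ℝ) • T x₀ := by
      rw [ha, hb, ← map_add,
        show x₀ + (1 * t) • w + (x₀ + ((-1) * t) • w) = (2:ℝ) • x₀ from by module, map_smul]
    rw [hsum, norm_smul, Real.norm_ofNat] at this
    linarith
  -- mask operator
  set PA := maskCLM A with hPA_def
  have hPAnorm : ∀ w, ‖PA w‖ ≤ ‖w‖ := by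
    intro w
    refine pinorm_le _ (norm_nonneg w) fun k => ?_
    rw [hPA_def, maskCLM_apply]
    by_cases hk : k ∈ A
    · simp only [hk, if_true]; exact picoord_le w k
    · simp [hk]
  have hTPA : ‖T.comp PA - T‖ ≤ ε₁ := by
    refine ContinuousLinearMap.opNorm_le_bound _ (le_of_lt hε₁0) fun w => ?_
    rcases eq_or_ne w 0 with rfl | hw
    · simp
    · have hw' : (0:ℝ) < ‖w‖ := norm_pos_iff.2 hw
      have hz : ∀ k ∈ A, (‖w‖⁻¹ • (PA w - w)) k = 0 := by
        intro k hk
        simp only [PiLp.smul_apply, PiLp.sub_apply]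
        rw [hPA_def, maskCLM_apply]
        simp [hk]
      have hzn : ‖(‖w‖⁻¹ • (PA w - w))‖ ≤ 1 := by
        rw [norm_smul, norm_inv, norm_norm]
        refine inv_mul_le_one_of_le₀ ?_ (norm_nonneg w)
        refine pinorm_le _ (norm_nonneg w) fun k => ?_
        simp only [PiLp.sub_apply]
        rw [hPA_def, maskCLM_apply]
        by_cases hk : k ∈ A
        · simp [hk]
        · simp only [hk, if_false, zero_sub, norm_neg]
          exact picoord_le w k
      have h3 := claim1 _ hzn hz
      simp only [map_smul, norm_smul, norm_inv, norm_norm] at h3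
      have h4 : ‖T (PA w - w)‖ ≤ ε₁ * ‖w‖ := by
        rw [mul_comm]
        exact (inv_mul_le_iff₀ hw').1 h3
      calc ‖(T.comp PA - T) w‖ = ‖T (PA w - w)‖ := by
            simp only [ContinuousLinearMap.sub_apply, ContinuousLinearMap.comp_apply, ← map_sub]
      _ ≤ ε₁ * ‖w‖ := h4
    -- unit directions of the big coordinates
  have ht1' : (0:ℝ) < 1 - t := by linarith
  have hx₀kpos : ∀ k ∈ A, 0 < ‖x₀ k‖ := fun k hk => lt_trans ht1' ((hmemA k).1 hk)
  set uN : ∀ k : Fin n, EuclideanSpace ℝ (Fin (k.1 + 1)) := fun k => ‖x₀ k‖⁻¹ • x₀ k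
    with huN_def
  have huNnorm : ∀ k ∈ A, ‖uN k‖ = 1 := by
    intro k hk
    rw [huN_def]
    simp only [norm_smul, norm_inv, norm_norm]
    exact inv_mul_cancel₀ (ne_of_gt (hx₀kpos k hk))
  have hr1 : r ≤ 1 / 8 := by rw [hr_def]; linarith
  have hη1 : η < 1 := by
    have h1 : r * t ≤ (1/8) * (1/100) := by
      refine mul_le_mul hr1 ht1 ht0.le (by norm_num)
    linarith only [hηrt, h1]
  have hTx₀pos : 0 < ‖T x₀‖ := by linarith only [hTx₀, hη1]
  set yN : Y := ‖T x₀‖⁻¹ • T x₀ with hyN_def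
  have hyN : ‖yN‖ = 1 := by
    rw [hyN_def, norm_smul, norm_inv, norm_norm]
    exact inv_mul_cancel₀ (ne_of_gt hTx₀pos)
  set f := avgInner A uN with hf_def
  have hfapp : ∀ w, f w = (m:ℝ)⁻¹ * ∑ k ∈ A, ⟪uN k, w k⟫ := fun w => avgInner_apply A uN w
  have hfbound : ∀ w, |f w| ≤ ‖w‖ := by
    intro w
    rw [hfapp]
    have h1 : |∑ k ∈ A, ⟪uN k, w k⟫| ≤ ∑ k ∈ A, ‖w‖ := by
      refine (Finset.abs_sum_le_sum_abs _ _).trans (Finset.sum_le_sum fun k hk => ?_)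
      calc |⟪uN k, w k⟫| ≤ ‖uN k‖ * ‖w k‖ := abs_real_inner_le_norm _ _
      _ = ‖w k‖ := by rw [huNnorm k hk, one_mul]
      _ ≤ ‖w‖ := picoord_le w k
    rw [Finset.sum_const] at h1
    rw [abs_mul, abs_of_pos (inv_pos.2 hm0)]
    calc (m:ℝ)⁻¹ * |∑ k ∈ A, ⟪uN k, w k⟫| ≤ (m:ℝ)⁻¹ * ((m:ℝ) * ‖w‖) := by
          refine mul_le_mul_of_nonneg_left ?_ (inv_nonneg.2 hm0.le)
          simpa [nsmul_eq_mul, hm_def] using h1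
    _ = ‖w‖ := by field_simp
  have hfnorm : ‖f‖ ≤ 1 := by
    refine ContinuousLinearMap.opNorm_le_bound _ zero_le_one fun w => ?_
    rw [Real.norm_eq_abs, one_mul]
    exact hfbound w
  have hfx₀ : 1 - t ≤ f x₀ := by
    rw [hfapp]
    have hterm : ∀ k ∈ A, (1:ℝ) - t ≤ ⟪uN k, x₀ k⟫ := by
      intro k hk
      have heq : ⟪uN k, x₀ k⟫ = ‖x₀ k‖ := by
        rw [huN_def]
        simp only [real_inner_smul_left, real_inner_self_eq_norm_sq]
        field_simp [ne_of_gt (hx₀kpos k hk)]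
      rw [heq]
      exact le_of_lt ((hmemA k).1 hk)
    have h1 : (m:ℝ) * (1 - t) ≤ ∑ k ∈ A, ⟪uN k, x₀ k⟫ := by
      have := Finset.card_nsmul_le_sum A (fun k => ⟪uN k, x₀ k⟫) (1 - t) hterm
      simpa [nsmul_eq_mul, hm_def] using this
    calc (1:ℝ) - t = (m:ℝ)⁻¹ * ((m:ℝ) * (1 - t)) := by field_simp
    _ ≤ (m:ℝ)⁻¹ * ∑ k ∈ A, ⟪uN k, x₀ k⟫ :=
        mul_le_mul_of_nonneg_left h1 (inv_nonneg.2 hm0.le)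
  have hfx₀0 : (0:ℝ) ≤ f x₀ := by linarith
  -- the perturbed operator
  set S' : FinLinftySum n →L[ℝ] Y := T.comp PA + r • f.smulRight yN with hS'_def
  have hS'app : ∀ w, S' w = T (PA w) + (r * f w) • yN := by
    intro w
    rw [hS'_def]
    simp only [ContinuousLinearMap.add_apply, ContinuousLinearMap.coe_smul', Pi.smul_apply,
      ContinuousLinearMap.smulRight_apply, ContinuousLinearMap.comp_apply, smul_smul]
  have hboost : ∀ c : ℝ, 0 ≤ c → ‖T x₀ + c • yN‖ = ‖T x₀‖ + c := by
    intro c hc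
    rw [hyN_def, smul_smul,
      show T x₀ + (c * ‖T x₀‖⁻¹) • T x₀ = (1 + c * ‖T x₀‖⁻¹) • T x₀ from by module,
      norm_smul, Real.norm_eq_abs, abs_of_nonneg (by positivity)]
    field_simp
  have hdiff : ‖T (PA x₀) - T x₀‖ ≤ ε₁ := by
    calc ‖T (PA x₀) - T x₀‖ = ‖(T.comp PA - T) x₀‖ := by
          simp only [ContinuousLinearMap.sub_apply, ContinuousLinearMap.comp_apply]
    _ ≤ ‖T.comp PA - T‖ * ‖x₀‖ := ContinuousLinearMap.le_opNorm _ _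
    _ ≤ ε₁ := by rw [hx₀, mul_one]; exact hTPA
  have hS'x₀ : ‖T x₀‖ + r * f x₀ - ε₁ ≤ ‖S' x₀‖ := by
    have h1 : S' x₀ = (T x₀ + (r * f x₀) • yN) + (T (PA x₀) - T x₀) := by
      rw [hS'app]; abel
    have h3 : ‖T x₀ + (r * f x₀) • yN‖ = ‖T x₀‖ + r * f x₀ :=
      hboost _ (mul_nonneg hr0.le hfx₀0)
    have h5 : ‖T x₀ + (r * f x₀) • yN‖ ≤ ‖S' x₀‖ + ‖T (PA x₀) - T x₀‖ := by
      rw [h1]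
      have := norm_sub_le ((T x₀ + (r * f x₀) • yN) + (T (PA x₀) - T x₀)) (T (PA x₀) - T x₀)
      simpa using this
    linarith
  have hS'ge : 1 - η + r * (1 - t) - ε₁ ≤ ‖S'‖ := by
    have h1 : ‖S' x₀‖ ≤ ‖S'‖ := by
      have := S'.le_opNorm x₀
      rwa [hx₀, mul_one] at this
    have h2 : r * (1 - t) ≤ r * f x₀ := mul_le_mul_of_nonneg_left hfx₀ hr0.le
    linarith
  have hS'1 : 1 ≤ ‖S'‖ := by
    have h6 : r * t ≤ r * (1/3) := by
      refine mul_le_mul_of_nonneg_left (by linarith only [ht1]) hr0.le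
    have hexp : r * (1 - t) = r - r * t := by ring
    have hε₁' : ε₁ = r * t := hε₁_def
    linarith only [hS'ge, hηrt, hexp, h6, hε₁']
  have hS'pos : (0:ℝ) < ‖S'‖ := lt_of_lt_of_le one_pos hS'1
  have hbst : ‖r • f.smulRight yN‖ ≤ r := by
    rw [clm_norm_smul, abs_of_pos hr0, ContinuousLinearMap.norm_smulRight_apply,
      hyN, mul_one]
    calc r * ‖f‖ ≤ r * 1 := mul_le_mul_of_nonneg_left hfnorm hr0.le
    _ = r := mul_one r
  have hTPA1 : ‖T.comp PA‖ ≤ 1 := by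
    refine ContinuousLinearMap.opNorm_le_bound _ zero_le_one fun w => ?_
    calc ‖(T.comp PA) w‖ = ‖T (PA w)‖ := by rw [ContinuousLinearMap.comp_apply]
    _ ≤ ‖T‖ * ‖PA w‖ := T.le_opNorm _
    _ ≤ 1 * ‖w‖ := by
        rw [hT]
        exact mul_le_mul_of_nonneg_left (hPAnorm w) zero_le_one
  have hS'le : ‖S'‖ ≤ 1 + r := by
    rw [hS'_def]
    refine le_trans (norm_add_le _ _) ?_
    linarith
  -- the maximizer
  obtain ⟨u₁, hu₁, hu₁max⟩ := exists_max S'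
  set u' := if 0 ≤ f u₁ then u₁ else -u₁ with hu'_def
  have hu'le : ‖u'‖ ≤ 1 := by
    rw [hu'_def]; split_ifs
    · exact hu₁
    · rw [norm_neg]; exact hu₁
  have hfu'0 : 0 ≤ f u' := by
    rw [hu'_def]; split_ifs with h
    · exact h
    · rw [map_neg]; push_neg at h; linarith
  have hS'u' : ‖S' u'‖ = ‖S'‖ := by
    rw [hu'_def]; split_ifs
    · exact hu₁max
    · rw [map_neg, norm_neg]; exact hu₁max
  set κ : ℝ := t + (η + ε₁) / r with hκ_def
  have hκ0 : 0 < κ := by positivity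
  have hκ3t : κ ≤ 3 * t := by
    rw [hκ_def]
    have h1 : (η + ε₁) / r ≤ 2 * t := by
      rw [div_le_iff₀ hr0]
      have hε₁' : ε₁ = r * t := hε₁_def
      have : 2 * t * r = r * t + r * t := by ring
      linarith only [hηrt, hε₁', this]
    linarith only [h1]
  have hfu' : 1 - κ ≤ f u' := by
    have h1 : ‖S' u'‖ ≤ 1 + r * f u' := by
      rw [hS'app]
      refine le_trans (norm_add_le _ _) ?_
      have ha : ‖T (PA u')‖ ≤ 1 := by
        calc ‖T (PA u')‖ ≤ ‖T‖ * ‖PA u'‖ := T.le_opNorm _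
        _ ≤ 1 * 1 := by
            rw [hT]
            exact mul_le_mul_of_nonneg_left ((hPAnorm u').trans hu'le) zero_le_one
        _ = 1 := one_mul 1
      have hb : ‖(r * f u') • yN‖ = r * f u' := by
        rw [norm_smul, hyN, mul_one, Real.norm_eq_abs, abs_of_nonneg (mul_nonneg hr0.le hfu'0)]
      linarith
    have h2 : r * (1 - t) - η - ε₁ ≤ r * f u' := by
      rw [hS'u'] at h1
      linarith [hS'ge]
    have h4 : r * (1 - κ) ≤ r * f u' := by
      have : r * (1 - κ) = r * (1 - t) - (η + ε₁) := by
        rw [hκ_def]; field_simp; ring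
      linarith
    exact le_of_mul_le_mul_left h4 hr0
  -- coordinates of the maximizer are pinned
  have hinner : ∀ k ∈ A, 1 - (m:ℝ) * κ ≤ ⟪uN k, u' k⟫ := by
    intro k hk
    have hsum : (m:ℝ) * (1 - κ) ≤ ∑ j ∈ A, ⟪uN j, u' j⟫ := by
      have h := hfu'
      rw [hfapp] at h
      have h2 := mul_le_mul_of_nonneg_left h hm0.le
      rwa [← mul_assoc, mul_inv_cancel₀ (ne_of_gt hm0), one_mul] at h2
    have hterm : ∀ j ∈ A.erase k, ⟪uN j, u' j⟫ ≤ 1 := by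
      intro j hj
      have hj' : j ∈ A := Finset.mem_of_mem_erase hj
      calc ⟪uN j, u' j⟫ ≤ ‖uN j‖ * ‖u' j‖ := real_inner_le_norm _ _
      _ ≤ 1 := by
          rw [huNnorm j hj', one_mul]
          exact (picoord_le u' j).trans hu'le
    have hsum2 : ∑ j ∈ A.erase k, ⟪uN j, u' j⟫ ≤ (m:ℝ) - 1 := by
      have := Finset.sum_le_card_nsmul (A.erase k) _ 1 hterm
      rw [Finset.card_erase_of_mem hk, nsmul_eq_mul, mul_one] at this
      refine this.trans ?_
      rw [Nat.cast_sub (Finset.card_pos.2 hAne)]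
      simp [hm_def]
    have hsplit : ⟪uN k, u' k⟫ + ∑ j ∈ A.erase k, ⟪uN j, u' j⟫ = ∑ j ∈ A, ⟪uN j, u' j⟫ :=
      Finset.add_sum_erase A (fun j => ⟪uN j, u' j⟫) hk
    have hexp : (m:ℝ) * (1 - κ) = (m:ℝ) - (m:ℝ) * κ := by ring
    linarith
  have hclose : ∀ k ∈ A, ‖u' k - uN k‖ ≤ e / 4 := by
    intro k hk
    have h1 : ‖u' k - uN k‖ ^ 2 ≤ 2 * ((m:ℝ) * κ) := by
      rw [norm_sub_sq_real, real_inner_comm, huNnorm k hk]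
      have h2 : ‖u' k‖ ≤ 1 := (picoord_le u' k).trans hu'le
      have h2' : ‖u' k‖ ^ 2 ≤ 1 := by
        calc ‖u' k‖ ^ 2 ≤ 1 ^ 2 := pow_le_pow_left₀ (norm_nonneg _) h2 2
        _ = 1 := one_pow 2
      have h3 := hinner k hk
      have h3' : 1 ^ 2 = 1 := one_pow 2
      linarith only [h2', h3, h3']
    have h4 : 2 * ((m:ℝ) * κ) ≤ (e / 4) ^ 2 := by
      have h5 : (m:ℝ) * κ ≤ ((n:ℝ) + 1) * (3 * t) := by
        refine mul_le_mul (by linarith) hκ3t hκ0.le (by positivity)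
      calc 2 * ((m:ℝ) * κ) ≤ 2 * (((n:ℝ) + 1) * (3 * t)) := by linarith only [h5]
      _ = 6 * (t * ((n:ℝ) + 1)) := by ring
      _ = 6 * (e ^ 2 / 100) := by rw [htn]
      _ ≤ (e / 4) ^ 2 := by
          have : (e / 4) ^ 2 = e ^ 2 / 16 := by ring
          rw [this]
          linarith only [sq_nonneg e]
    exact (pow_le_pow_iff_left₀ (norm_nonneg _) (by positivity) two_ne_zero).1 (h1.trans h4)
  -- the attaining point
  set u₀ : FinLinftySum n :=
    (WithLp.equiv ⊤ _).symm (fun k => if k ∈ A then u' k else x₀ k) with hu₀_def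
  have hu₀coord : ∀ k, u₀ k = if k ∈ A then u' k else x₀ k := fun k => rfl
  have hPAu₀ : PA u₀ = PA u' := by
    apply PiLp.ext; intro k
    rw [hPA_def, maskCLM_apply, maskCLM_apply]
    by_cases hk : k ∈ A <;> simp [hk, hu₀coord k]
  have hfu₀ : f u₀ = f u' := by
    rw [hfapp, hfapp]
    congr 1
    refine Finset.sum_congr rfl fun k hk => ?_
    rw [hu₀coord k, if_pos hk]
  have hS'u₀ : S' u₀ = S' u' := by rw [hS'app, hS'app, hPAu₀, hfu₀]
  have hu₀le : ‖u₀‖ ≤ 1 := by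
    refine pinorm_le _ zero_le_one fun k => ?_
    rw [hu₀coord k]
    by_cases hk : k ∈ A
    · rw [if_pos hk]; exact (picoord_le u' k).trans hu'le
    · rw [if_neg hk]; exact hx₀k k
  have hu₀norm : ‖u₀‖ = 1 := by
    refine le_antisymm hu₀le ?_
    have h1 : ‖S'‖ = ‖S' u₀‖ := by rw [hS'u₀, hS'u']
    have h2 : ‖S' u₀‖ ≤ ‖S'‖ * ‖u₀‖ := S'.le_opNorm u₀
    have h3 : ‖S'‖ * 1 ≤ ‖S'‖ * ‖u₀‖ := by
      rw [mul_one]; linarith only [h1, h2]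
    exact le_of_mul_le_mul_left h3 hS'pos
  have hu₀x₀ : ‖u₀ - x₀‖ < ε := by
    have hb : ‖u₀ - x₀‖ ≤ e / 4 + t := by
      refine pinorm_le _ (by positivity) fun k => ?_
      simp only [PiLp.sub_apply]
      rw [hu₀coord k]
      by_cases hk : k ∈ A
      · rw [if_pos hk]
        have hx : ‖uN k - x₀ k‖ = 1 - ‖x₀ k‖ := by
          have heq : uN k - x₀ k = (‖x₀ k‖⁻¹ - 1) • x₀ k := by
            rw [huN_def, sub_smul, one_smul]
          have hinv : 1 ≤ ‖x₀ k‖⁻¹ := by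
            rw [le_inv_comm₀ one_pos (hx₀kpos k hk)]
            simpa using hx₀k k
          rw [heq, norm_smul, Real.norm_eq_abs, abs_of_nonneg (by linarith), sub_mul,
            inv_mul_cancel₀ (ne_of_gt (hx₀kpos k hk)), one_mul]
        have htri : ‖u' k - x₀ k‖ ≤ ‖u' k - uN k‖ + ‖uN k - x₀ k‖ := by
          have := norm_add_le (u' k - uN k) (uN k - x₀ k)
          simpa using this
        have hkx : 1 - ‖x₀ k‖ ≤ t := by
          have := (hmemA k).1 hk
          linarith
        calc ‖u' k - x₀ k‖ ≤ ‖u' k - uN k‖ + ‖uN k - x₀ k‖ := htri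
        _ ≤ e / 4 + (1 - ‖x₀ k‖) := by
            rw [hx]
            exact add_le_add_left (hclose k hk) _
        _ ≤ e / 4 + t := by linarith
      · rw [if_neg hk]
        simp only [sub_self, norm_zero]
        positivity
    have hlt : e / 4 + t < e := by linarith
    linarith
  -- the operator S
  set S : FinLinftySum n →L[ℝ] Y := ‖S'‖⁻¹ • S' with hS_def
  have hSnorm : ‖S‖ = 1 := by
    rw [hS_def, clm_norm_smul, abs_inv, abs_norm]
    exact inv_mul_cancel₀ (ne_of_gt hS'pos)
  have hSu₀ : ‖S u₀‖ = 1 := by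
    rw [hS_def]
    simp only [ContinuousLinearMap.coe_smul', Pi.smul_apply]
    rw [norm_smul, norm_inv, norm_norm, hS'u₀, hS'u']
    exact inv_mul_cancel₀ (ne_of_gt hS'pos)
  have hST : ‖S - T‖ < ε := by
    have hinv1 : ‖S'‖⁻¹ ≤ 1 := by
      rw [inv_le_one_iff₀]
      right; exact hS'1
    have h1 : ‖S - S'‖ = ‖S'‖ - 1 := by
      rw [hS_def, show ‖S'‖⁻¹ • S' - S' = (‖S'‖⁻¹ - 1) • S' from by module, clm_norm_smul,
        abs_of_nonpos (by linarith only [hinv1]), neg_sub, sub_mul, one_mul,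
        inv_mul_cancel₀ (ne_of_gt hS'pos)]
    have h2 : ‖S' - T‖ ≤ ε₁ + r := by
      have heq : S' - T = (T.comp PA - T) + r • f.smulRight yN := by
        rw [hS'_def]; abel
      rw [heq]
      refine le_trans (norm_add_le _ _) ?_
      linarith only [hTPA, hbst]
    have h3 : ‖S - T‖ ≤ ‖S - S'‖ + ‖S' - T‖ := by
      have := dist_triangle S S' T
      simpa [dist_eq_norm] using this
    have h4 : ε₁ ≤ e / 800 := by
      have hh : ε₁ = (e/8) * t := by rw [hε₁_def, hr_def]
      have h6 : (e/8) * t ≤ (e/8) * (1/100) := by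
        refine mul_le_mul_of_nonneg_left ht1 (by positivity)
      linarith only [hh, h6]
    have h5 : 2 * r + ε₁ < e := by
      have hh : r = e / 8 := hr_def
      linarith only [h4, he0, hh]
    linarith only [h1, h2, h3, h4, h5, hS'le, heε]
  exact ⟨u₀, S, hu₀norm, hSnorm, hSu₀, hu₀x₀, hST⟩
end
end

section
/- Let Y be a strictly convex Banach space and let R : c0(⊕_{n=1}^∞ ℓ2^n) → Y be a bounded linear operator with ‖R‖ = 1 that attains its norm at a unit vector u satisfying ‖u − e₁‖ < 1. Then R(e_k) = 0 for every coordinate k ∉ I(1), i.e. for every k ≥ 2. -/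
open Filter Topology

noncomputable section

/-!
If block `j ≠ 0` of `u` had norm `1`, then `‖u - e₁‖ ≥ 1`; so it has norm `< 1`, and for
`t = 1 - ‖u_j‖ > 0` and any basis vector `e` of block `j` both `u + t e` and `u - t e` lie in the
unit ball. Their images under `R` lie in the unit ball of `Y` and have midpoint `R u`, a unit
vector, so strict convexity forces them to coincide, i.e. `R e = 0`.
-/

section StrictConvex

variable {E F : Type*} [NormedAddCommGroup E] [NormedSpace ℝ E]
  [NormedAddCommGroup F] [NormedSpace ℝ F] [StrictConvexSpace ℝ F]

theorem eq_zero_of_norm_add_le_of_norm_sub_le {x v : F} (hadd : ‖x + v‖ ≤ ‖x‖)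
    (hsub : ‖x - v‖ ≤ ‖x‖) : v = 0 := by
  by_contra hv
  have hne : x + v ≠ x - v := by
    intro h
    have h2 : (2 : ℝ) • v = 0 := by rw [← sub_eq_zero.mpr h]; module
    exact hv ((smul_eq_zero.mp h2).resolve_left two_ne_zero)
  have := norm_combo_lt_of_ne hadd hsub hne (by norm_num : (0 : ℝ) < 1 / 2)
    (by norm_num : (0 : ℝ) < 1 / 2) (by norm_num)
  rw [show (1 / 2 : ℝ) • (x + v) + (1 / 2 : ℝ) • (x - v) = x by module] at this
  exact this.false

theorem ContinuousLinearMap.map_eq_zero_of_norm_add_le_one_of_norm_sub_le_one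
    {T : E →L[ℝ] F} (hT : ‖T‖ ≤ 1) {u v : E} (hTu : ‖T u‖ = 1) (hadd : ‖u + v‖ ≤ 1)
    (hsub : ‖u - v‖ ≤ 1) : T v = 0 := by
  have hle : ∀ w, ‖T w‖ ≤ ‖w‖ := fun w => (T.le_of_opNorm_le hT w).trans_eq (one_mul _)
  refine eq_zero_of_norm_add_le_of_norm_sub_le (x := T u) ?_ ?_
  · simpa only [hTu, map_add] using (hle (u + v)).trans hadd
  · simpa only [hTu, map_sub] using (hle (u - v)).trans hsub

end StrictConvex

theorem c0E2.norm_apply_le (x : c0E2) (n : ℕ) : ‖(x : lp E2 ⊤) n‖ ≤ ‖x‖ :=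
  lp.norm_apply_le_norm ENNReal.top_ne_zero _ n

theorem stdBasis_apply_self (j : ℕ) (i : Fin (j + 1)) :
    (stdBasis j i : lp E2 ⊤) j = EuclideanSpace.single i 1 :=
  lp.single_apply_self ⊤ j _

theorem stdBasis_apply_of_ne {j n : ℕ} (i : Fin (j + 1)) (h : n ≠ j) :
    (stdBasis j i : lp E2 ⊤) n = 0 :=
  lp.single_apply_ne ⊤ j _ h

theorem norm_apply_le_norm_sub_stdBasis_zero (x : c0E2) {n : ℕ} (hn : n ≠ 0) :
    ‖(x : lp E2 ⊤) n‖ ≤ ‖x - stdBasis 0 0‖ := by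
  have := c0E2.norm_apply_le (x - stdBasis 0 0) n
  rwa [show ((x - stdBasis 0 0 : c0E2) : lp E2 ⊤) = x - stdBasis 0 0 from rfl, lp.coeFn_sub,
    Pi.sub_apply, stdBasis_apply_of_ne 0 hn, sub_zero] at this

theorem norm_add_smul_stdBasis_le (x : c0E2) (s : ℝ) (j : ℕ) (i : Fin (j + 1)) :
    ‖x + s • stdBasis j i‖ ≤ max ‖x‖ (‖(x : lp E2 ⊤) j‖ + |s|) := by
  change ‖(x + s • stdBasis j i : lp E2 ⊤)‖ ≤ _
  refine lp.norm_le_of_forall_le ((norm_nonneg x).trans (le_max_left _ _)) fun n => ?_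
  rw [lp.coeFn_add, lp.coeFn_smul, Pi.add_apply, Pi.smul_apply]
  rcases eq_or_ne n j with rfl | hn
  · refine (norm_add_le _ _).trans (le_max_of_le_right ?_)
    rw [stdBasis_apply_self, norm_smul, PiLp.norm_single, norm_one, mul_one,
      Real.norm_eq_abs]
  · rw [stdBasis_apply_of_ne i hn, smul_zero, add_zero]
    exact (c0E2.norm_apply_le x n).trans (le_max_left _ _)

theorem stmt9_general (Y : Type*) [NormedAddCommGroup Y] [NormedSpace ℝ Y]
    [StrictConvexSpace ℝ Y]
    (R : c0E2 →L[ℝ] Y) (hR : ‖R‖ = 1) (u : c0E2) (hu : ‖u‖ = 1) (hRu : ‖R u‖ = 1)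
    (hue : ‖u - stdBasis 0 0‖ < 1) :
    ∀ j : ℕ, j ≠ 0 → ∀ i : Fin (j + 1), R (stdBasis j i) = 0 := by
  intro j hj i
  set t := 1 - ‖(u : lp E2 ⊤) j‖
  have ht : 0 < t := by linarith [norm_apply_le_norm_sub_stdBasis_zero u hj]
  have hball : ∀ s, |s| = t → ‖u + s • stdBasis j i‖ ≤ 1 := fun s hs =>
    (norm_add_smul_stdBasis_le u s j i).trans (by rw [hu, hs]; simp [t])
  have hRt : R (t • stdBasis j i) = 0 :=
    R.map_eq_zero_of_norm_add_le_one_of_norm_sub_le_one hR.le hRu (hball t (abs_of_pos ht))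
      (by simpa [sub_eq_add_neg] using hball (-t) (by rw [abs_neg, abs_of_pos ht]))
  rwa [map_smul, smul_eq_zero, or_iff_right ht.ne'] at hRt

/-- Let `Y` be a strictly convex Banach space and `R : c₀(⊕ₙ ℓ₂ⁿ) → Y` a
norm-one operator attaining its norm at a unit vector `u` with `‖u - e₁‖ < 1`. Then `R` kills
every basis vector outside the first block `I(1)` (which consists of `e₁` alone). -/
theorem stmt9 (Y : Type*) [NormedAddCommGroup Y] [NormedSpace ℝ Y]
    [StrictConvexSpace ℝ Y] [CompleteSpace Y]
    (R : c0E2 →L[ℝ] Y) (hR : ‖R‖ = 1) (u : c0E2) (hu : ‖u‖ = 1) (hRu : ‖R u‖ = 1)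
    (hue : ‖u - stdBasis 0 0‖ < 1) :
    ∀ j : ℕ, j ≠ 0 → ∀ i : Fin (j + 1), R (stdBasis j i) = 0 :=
  stmt9_general Y R hR u hu hRu hue
end
end
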